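/- Let A₁ be a tetrahedron and B₁, B₂ two tetrahedra sharing a common face F (contained in a plane Π_F). Let P₁ be the equal-pressure plane for the pair (A₁,B₁) and P₂ the equal-pressure plane for the pair (A₁,B₂), where the affine pressure fields on B₁ and B₂ agree on the shared face F. Then P₁ ∩ Π_F = P₂ ∩ Π_F, i.e., the two pieces of contact surface share the same trace on the common face plane. -/

import Mathlib

open Set

theorem Set.EqOn.setOf_eq_inter_eq {α β : Type*} {f g h : α → β} {s : Set α}
    (hgh : EqOn g h s) : {x | f x = g x} ∩ s = {x | f x = h x} ∩ s := by
  ext x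
  constructor
  · rintro ⟨hfg, hx⟩
    exact ⟨hfg.trans (hgh hx), hx⟩
  · rintro ⟨hfh, hx⟩
    exact ⟨hfh.trans (hgh hx).symm, hx⟩

/-- Let `pA` be the affine pressure field on tetrahedron `A₁`, and
`pB₁`, `pB₂` the affine pressure fields on tetrahedra `B₁`, `B₂` sharing a common face
contained in the plane `Pl`. If `pB₁` and `pB₂` agree on `Pl`, then the equal-pressure
planes `P₁ = {x | pA x = pB₁ x}` and `P₂ = {x | pA x = pB₂ x}` have the same trace on
`Pl`: `P₁ ∩ Pl = P₂ ∩ Pl`. -/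
theorem equal_pressure_planes_agree_on_common_face
    (pA pB₁ pB₂ : EuclideanSpace ℝ (Fin 3) →ᵃ[ℝ] ℝ)
    (Pl : Set (EuclideanSpace ℝ (Fin 3)))
    (hagree : ∀ x ∈ Pl, pB₁ x = pB₂ x) :
    {x : EuclideanSpace ℝ (Fin 3) | pA x = pB₁ x} ∩ Pl =
      {x : EuclideanSpace ℝ (Fin 3) | pA x = pB₂ x} ∩ Pl :=
  EqOn.setOf_eq_inter_eq (f := pA) hagree
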